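/- Let k ≥ 2 and suppose d categorical features with finite domains are partitioned into m functional-dependency chains of lengths d₁,…,d_m (so d = d₁ + ⋯ + d_m), where within each chain consecutive features are related by functions as in an FD-chain: for every data point the value of each feature in a chain determines the value of the next feature in that chain. For each feature, form k centroids as in the optimal categorical clustering (the k−1 heaviest indicator vectors as singletons plus the weighted centroid of the remaining light indicators), and assign each data point x ∈ X to the grid point whose component for each feature is the nearest of that feature's centroids to the one-hot encoding of the corresponding value of x. Then the number of grid points that are the assignment of at least one data point (hence the number of grid points of nonzero weight) is at most ∏_{i=1}^m (1 + d_i(k−1)). -/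

import Mathlib

/-! Along a functional-dependency chain, two data points that agree at one feature agree at
every later feature. So the nearest-centroid assignment of a point along a chain is fixed by
its first heavy position and the heavy value there, or by the fact that all its values are
light: at most `1 + dᵢ(k - 1)` possibilities per chain, and the chains combine freely. -/

open Finset

noncomputable section

open Classical in
/-- The marginal weight of a value `e` of feature `t`: the total weight of the data
points `x ∈ X` with `x t = e`. -/
def margWeight {ι : Type} {D : ι → Type} [∀ t, Fintype (D t)]
    (X : Finset (∀ t, D t)) (w : (∀ t, D t) → ℝ) (t : ι) (e : D t) : ℝ :=
  ∑ x ∈ X.filter (fun x => x t = e), w x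

open Classical in
/-- The "light" values of feature `t`: those occurring in the data `X` but not in the
heavy set `H t`. -/
def lightSet {ι : Type} {D : ι → Type} [∀ t, Fintype (D t)]
    (X : Finset (∀ t, D t)) (H : ∀ t, Finset (D t)) (t : ι) : Finset (D t) :=
  (X.image (fun x => x t)) \ H t

open Classical in
/-- The weighted centroid of the one-hot encodings of the light values of feature `t`. -/
def lightCentroid {ι : Type} {D : ι → Type} [∀ t, Fintype (D t)]
    (X : Finset (∀ t, D t)) (w : (∀ t, D t) → ℝ) (H : ∀ t, Finset (D t)) (t : ι) :
    EuclideanSpace ℝ (D t) :=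
  ∑ e ∈ lightSet X H t,
    (margWeight X w t e / ∑ e' ∈ lightSet X H t, margWeight X w t e') •
      EuclideanSpace.single e (1 : ℝ)

open Classical in
/-- The componentwise nearest-centroid assignment map: feature value `x t` is sent to its
own one-hot vector if it is heavy, and to the light centroid `μ_t` otherwise. -/
def assign {ι : Type} {D : ι → Type} [∀ t, Fintype (D t)]
    (X : Finset (∀ t, D t)) (w : (∀ t, D t) → ℝ) (H : ∀ t, Finset (D t))
    (x : ∀ t, D t) (t : ι) : EuclideanSpace ℝ (D t) :=
  if x t ∈ H t then EuclideanSpace.single (x t) (1 : ℝ) else lightCentroid X w H t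

lemma Finset.card_image_le_card_image_of_determines {α β γ : Type*} [DecidableEq β]
    [DecidableEq γ] {s : Finset α} {f : α → β} {g : α → γ}
    (h : ∀ x ∈ s, ∀ y ∈ s, g x = g y → f x = f y) : #(s.image f) ≤ #(s.image g) := by
  cases isEmpty_or_nonempty α
  · simp [s.eq_empty_of_isEmpty]
  refine card_le_card_of_surjOn (fun c => f (Function.invFunOn g s c)) ?_
  intro b hb
  obtain ⟨x, hx, rfl⟩ := mem_image.1 hb
  have hinv := Function.invFunOn_pos (f := g) ⟨x, hx, rfl⟩
  exact ⟨g x, by simpa using ⟨x, hx, rfl⟩, h _ hinv.1 x hx hinv.2⟩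

lemma Finset.card_image_le_prod_card_image_eval {α ι : Type*} [Fintype ι] [DecidableEq ι]
    {β : ι → Type*} [∀ i, DecidableEq (β i)] (s : Finset α) (f : α → ∀ i, β i) :
    #(s.image f) ≤ ∏ i, #(s.image fun x => f x i) := by
  calc #(s.image f) ≤ #(Fintype.piFinset fun i => s.image fun x => f x i) := by
        refine card_le_card fun _ hv => ?_
        obtain ⟨x, hx, rfl⟩ := mem_image.1 hv
        exact Fintype.mem_piFinset.2 fun i => mem_image_of_mem _ hx
    _ = ∏ i, #(s.image fun x => f x i) := Fintype.card_piFinset _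

namespace FDChain

variable {n : ℕ} {E : Fin n → Type*}

lemma eq_of_le_of_eq {u v : ∀ p, E p}
    (hstep : ∀ p q : Fin n, q.val = p.val + 1 → u p = v p → u q = v q)
    {p q : Fin n} (hpq : p ≤ q) (h : u p = v p) : u q = v q := by
  suffices ∀ q : ℕ, p.val ≤ q → ∀ hq : q < n, u ⟨q, hq⟩ = v ⟨q, hq⟩ from this q hpq q.2
  intro q hpq
  induction q, hpq using Nat.le_induction with
  | base => exact fun _ => h
  | succ q _ ih => exact fun hq => hstep ⟨q, by omega⟩ ⟨q + 1, hq⟩ rfl (ih (by omega))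

variable [∀ p, DecidableEq (E p)]

def firstHeavy (H : ∀ p, Finset (E p)) (u : ∀ p, E p) : Option (Σ p, E p) :=
  if h : ∃ p, u p ∈ H p then some ⟨Fin.find _ h, u (Fin.find _ h)⟩ else none

lemma firstHeavy_mem (H : ∀ p, Finset (E p)) (u : ∀ p, E p) :
    firstHeavy H u ∈ insert none ((univ.sigma H).image some) := by
  unfold firstHeavy
  split_ifs with h
  · exact mem_insert_of_mem (mem_image_of_mem _ (mem_sigma.2 ⟨mem_univ _, Fin.find_spec h⟩))
  · exact mem_insert_self _ _

lemma card_insert_none_image_some_le (H : ∀ p, Finset (E p)) :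
    #(insert none ((univ.sigma H).image some)) ≤ 1 + ∑ p, #(H p) := by
  rw [add_comm, ← card_sigma]
  exact (card_insert_le _ _).trans_eq (by rw [card_image_of_injective _ (Option.some_injective _)])

variable {F : Fin n → Type*}

/-- Along a chain, a componentwise map that is constant off the heavy values only sees the
first heavy position: before it everything is light, after it the values are determined. -/
lemma apply_eq_of_firstHeavy_eq {H : ∀ p, Finset (E p)} {g : ∀ p, E p → F p}
    (hg : ∀ p, ∀ e ∉ H p, ∀ e' ∉ H p, g p e = g p e') {u v : ∀ p, E p}
    (hstep : ∀ p q : Fin n, q.val = p.val + 1 → u p = v p → u q = v q)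
    (huv : firstHeavy H u = firstHeavy H v) (p : Fin n) : g p (u p) = g p (v p) := by
  unfold firstHeavy at huv
  split_ifs at huv with hu hv hv
  · obtain ⟨hfind, hval⟩ := Sigma.mk.inj_iff.1 (Option.some.inj huv)
    rcases lt_or_ge p (Fin.find _ hu) with hlt | hge
    · exact hg p _ (Fin.find_min hu hlt) _ (Fin.find_min hv (hfind ▸ hlt))
    · rw [← hfind] at hval
      exact congrArg (g p) (eq_of_le_of_eq hstep hge (eq_of_heq hval))
  · exact hg p _ (fun h => hu ⟨p, h⟩) _ (fun h => hv ⟨p, h⟩)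

theorem card_image_le {α : Type*} [∀ p, DecidableEq (F p)] (Y : Finset α)
    (f : α → ∀ p, E p) {H : ∀ p, Finset (E p)} {g : ∀ p, E p → F p}
    (hg : ∀ p, ∀ e ∉ H p, ∀ e' ∉ H p, g p e = g p e')
    (hfd : ∀ x ∈ Y, ∀ y ∈ Y, ∀ p q : Fin n, q.val = p.val + 1 → f x p = f y p → f x q = f y q) :
    #(Y.image fun x p => g p (f x p)) ≤ 1 + ∑ p, #(H p) :=
  calc #(Y.image fun x p => g p (f x p))
      ≤ #(Y.image fun x => firstHeavy H (f x)) :=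
        card_image_le_card_image_of_determines fun x hx y hy hxy =>
          funext (apply_eq_of_firstHeavy_eq hg (hfd x hx y hy) hxy)
    _ ≤ #(insert none ((univ.sigma H).image some)) :=
        card_le_card (image_subset_iff.2 fun x _ => firstHeavy_mem H (f x))
    _ ≤ 1 + ∑ p, #(H p) := card_insert_none_image_some_le H

end FDChain

section FeatureAssign

variable {ι : Type} {D : ι → Type} [∀ t, Fintype (D t)]
  (X : Finset (∀ t, D t)) (w : (∀ t, D t) → ℝ) (H : ∀ t, Finset (D t))

open Classical in
def featureAssign (t : ι) (e : D t) : EuclideanSpace ℝ (D t) :=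
  if e ∈ H t then EuclideanSpace.single e (1 : ℝ) else lightCentroid X w H t

lemma assign_apply (x : ∀ t, D t) (t : ι) : assign X w H x t = featureAssign X w H t (x t) :=
  rfl

lemma featureAssign_eq_of_notMem (t : ι) {e e' : D t} (he : e ∉ H t) (he' : e' ∉ H t) :
    featureAssign X w H t e = featureAssign X w H t e' := by
  simp only [featureAssign, he, he', if_false]

end FeatureAssign

open Classical in
theorem statement19_general (m k : ℕ)
    (len : Fin m → ℕ)
    (D : (Σ j : Fin m, Fin (len j)) → Type) [∀ t, Fintype (D t)]
    (X : Finset (∀ t, D t)) (w : (∀ t, D t) → ℝ)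
    (hchain : ∀ (j : Fin m) (p : ℕ) (h : p + 1 < len j),
      ∃ f : D ⟨j, ⟨p, Nat.lt_of_succ_lt h⟩⟩ → D ⟨j, ⟨p + 1, h⟩⟩,
        ∀ x ∈ X, x ⟨j, ⟨p + 1, h⟩⟩ = f (x ⟨j, ⟨p, Nat.lt_of_succ_lt h⟩⟩))
    (H : ∀ t, Finset (D t)) (hHcard : ∀ t, (H t).card = k - 1) :
    (X.image (assign X w H)).card ≤ ∏ j : Fin m, (1 + len j * (k - 1)) := by
  have hfd (j : Fin m) : ∀ x ∈ X, ∀ y ∈ X, ∀ p q : Fin (len j), q.val = p.val + 1 →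
      x ⟨j, p⟩ = y ⟨j, p⟩ → x ⟨j, q⟩ = y ⟨j, q⟩ := by
    rintro x hx y hy ⟨p, hp⟩ ⟨q, hq⟩ (rfl : q = p + 1) hxy
    obtain ⟨f, hf⟩ := hchain j p hq
    exact (hf x hx).trans ((congrArg f hxy).trans (hf y hy).symm)
  calc #(X.image (assign X w H))
      ≤ #(X.image fun x j p => assign X w H x ⟨j, p⟩) :=
        card_image_le_card_image_of_determines fun x _ y _ hxy =>
          funext fun ⟨j, p⟩ => congrFun (congrFun hxy j) p
    _ ≤ ∏ j, #(X.image fun x p => assign X w H x ⟨j, p⟩) :=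
        card_image_le_prod_card_image_eval _ _
    _ ≤ ∏ j : Fin m, (1 + len j * (k - 1)) := by
        refine prod_le_prod' fun j _ => ?_
        simp only [assign_apply]
        refine (FDChain.card_image_le X (fun x p => x ⟨j, p⟩)
          (fun p _ he _ he' => featureAssign_eq_of_notMem X w H ⟨j, p⟩ he he') (hfd j)).trans ?_
        simp [hHcard]

open Classical in
/-- suppose `d = d₁ + ⋯ + d_m` categorical features are partitioned into
`m` functional-dependency chains of lengths `d₁,…,d_m` (features are indexed by pairs
`⟨j, p⟩`, chain `j`, position `p`; within each chain every feature functionally determines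
the next one on the data `X`).  For each feature take the `k` centroids of the optimal
categorical clustering (the `k − 1` heaviest one-hot vectors plus the light centroid) and
assign each data point `x ∈ X` componentwise to its nearest centroid (heavy value ↦ its
one-hot vector, light value ↦ the light centroid).  Then the number of grid points which
are the assignment of at least one data point, i.e. the number of grid points of nonzero
weight, is at most `∏_{j=1}^m (1 + d_j(k − 1))`. -/
theorem statement19 (m k : ℕ) (hm : 1 ≤ m) (hk : 2 ≤ k)
    (len : Fin m → ℕ) (hlen : ∀ j, 1 ≤ len j)
    (D : (Σ j : Fin m, Fin (len j)) → Type) [∀ t, Fintype (D t)]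
    (X : Finset (∀ t, D t)) (w : (∀ t, D t) → ℝ) (hw : ∀ x ∈ X, 0 < w x)
    (hchain : ∀ (j : Fin m) (p : ℕ) (h : p + 1 < len j),
      ∃ f : D ⟨j, ⟨p, Nat.lt_of_succ_lt h⟩⟩ → D ⟨j, ⟨p + 1, h⟩⟩,
        ∀ x ∈ X, x ⟨j, ⟨p + 1, h⟩⟩ = f (x ⟨j, ⟨p, Nat.lt_of_succ_lt h⟩⟩))
    (H : ∀ t, Finset (D t)) (hHcard : ∀ t, (H t).card = k - 1)
    (hHheavy : ∀ t, ∀ e ∈ H t, ∀ e', e' ∉ H t →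
      margWeight X w t e' ≤ margWeight X w t e) :
    (X.image (assign X w H)).card ≤ ∏ j : Fin m, (1 + len j * (k - 1)) :=
  statement19_general m k len D X w hchain H hHcard

end
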